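/- Let λ be a σ-finite measure on a measurable space 𝒵 and γ : 𝒵 → ℝ≥0 measurable with ∫ γ dλ < ∞. Let (w₁, z₁), …, (w_K, z_K) be random pairs with values in ℝ≥0 × 𝒵 on a probability space, with Σ_k w_k > 0 almost surely, such that for every bounded measurable h and every k, E[w_k h(z_k)] = ∫ h γ dλ (each pair is strictly properly weighted for γ). Let J be an index in {1,…,K} drawn, conditionally on the particles, from the categorical distribution with probabilities w_k / Σ_j w_j (multinomial resampling). Then the resampled pair with weight w' := (1/K) Σ_j w_j and sample z' := z_J is strictly properly weighted for γ: for every bounded measurable h, E[w' h(z')] = ∫ h γ dλ. -/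

import Mathlib

open MeasureTheory

theorem Finset.sum_mul_sum_div_sum_mul {ι 𝕜 : Type*} [Fintype ι] [Field 𝕜] (w a : ι → 𝕜)
    (hw : ∑ j, w j ≠ 0) :
    (∑ j, w j) * ∑ k, (w k / ∑ j, w j) * a k = ∑ k, w k * a k := by
  rw [Finset.mul_sum]
  refine Finset.sum_congr rfl fun k _ => ?_
  field_simp

theorem integral_card_inv_mul_sum_of_integral_eq {Ω ι : Type*} [MeasurableSpace Ω]
    {μ : Measure Ω} [Fintype ι] [Nonempty ι] {f : ι → Ω → ℝ} {c : ℝ}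
    (hf_int : ∀ k, Integrable (f k) μ) (hf : ∀ k, ∫ ω, f k ω ∂μ = c) :
    ∫ ω, (Fintype.card ι : ℝ)⁻¹ * ∑ k, f k ω ∂μ = c := by
  rw [integral_const_mul, integral_finsetSum _ fun k _ => hf_int k,
    Finset.sum_congr rfl fun k _ => hf k, Finset.sum_const, Finset.card_univ, nsmul_eq_mul,
    ← mul_assoc, inv_mul_cancel₀ (Nat.cast_ne_zero.mpr Fintype.card_ne_zero), one_mul]

theorem resampling_preserves_strict_proper_weighting_general
    {𝒵 : Type*} [MeasurableSpace 𝒵] (lam : Measure 𝒵)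
    (γ : 𝒵 → ℝ)
    {Ω : Type*} [MeasurableSpace Ω] (μ : Measure Ω)
    (K : ℕ) (hK : 0 < K) (w : Fin K → Ω → ℝ) (z : Fin K → Ω → 𝒵)
    (hsum_pos : ∀ᵐ ω ∂μ, 0 < ∑ j, w j ω)
    (hspw : ∀ k, ∀ h : 𝒵 → ℝ, Measurable h → (∃ C, ∀ x, |h x| ≤ C) →
      Integrable (fun ω => w k ω * h (z k ω)) μ ∧
      ∫ ω, w k ω * h (z k ω) ∂μ = ∫ x, h x * γ x ∂lam)
    (h : 𝒵 → ℝ) (hh_meas : Measurable h) (hh_bdd : ∃ C, ∀ x, |h x| ≤ C) :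
    ∫ ω, ((K : ℝ)⁻¹ * ∑ j, w j ω) *
        (∑ k, (w k ω / ∑ j, w j ω) * h (z k ω)) ∂μ
      = ∫ x, h x * γ x ∂lam := by
  have : Nonempty (Fin K) := Fin.pos_iff_nonempty.mp hK
  have hmixture : ∀ᵐ ω ∂μ, ((K : ℝ)⁻¹ * ∑ j, w j ω) *
      (∑ k, (w k ω / ∑ j, w j ω) * h (z k ω)) = (K : ℝ)⁻¹ * ∑ k, w k ω * h (z k ω) := by
    filter_upwards [hsum_pos] with ω hS
    rw [mul_assoc, Finset.sum_mul_sum_div_sum_mul _ _ hS.ne']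
  rw [integral_congr_ae hmixture]
  simpa using integral_card_inv_mul_sum_of_integral_eq
    (fun k => (hspw k h hh_meas hh_bdd).1) (fun k => (hspw k h hh_meas hh_bdd).2)

/-- Multinomial resampling preserves strict proper weighting: if each weighted pair
`(w k, z k)` is strictly properly weighted for `γ`, and an index `J` is drawn
(conditionally on the particles) from the categorical distribution with probabilities
`w k / ∑ j, w j`, then the resampled pair with weight `(1/K) ∑ j, w j` and sample `z J`
is strictly properly weighted for `γ`.  The expectation over the resampling index `J`
is written explicitly as the categorical mixture `∑ k, (w k / ∑ j, w j) * h (z k)`. -/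
theorem resampling_preserves_strict_proper_weighting
    {𝒵 : Type*} [MeasurableSpace 𝒵] (lam : Measure 𝒵) [SigmaFinite lam]
    (γ : 𝒵 → ℝ) (hγ_meas : Measurable γ) (hγ_nonneg : ∀ z, 0 ≤ γ z)
    (hγ_int : Integrable γ lam)
    {Ω : Type*} [MeasurableSpace Ω] (μ : Measure Ω) [IsProbabilityMeasure μ]
    (K : ℕ) (hK : 0 < K) (w : Fin K → Ω → ℝ) (z : Fin K → Ω → 𝒵)
    (hw_meas : ∀ k, Measurable (w k)) (hz_meas : ∀ k, Measurable (z k))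
    (hw_nonneg : ∀ k, ∀ ω, 0 ≤ w k ω)
    (hsum_pos : ∀ᵐ ω ∂μ, 0 < ∑ j, w j ω)
    (hspw : ∀ k, ∀ h : 𝒵 → ℝ, Measurable h → (∃ C, ∀ x, |h x| ≤ C) →
      Integrable (fun ω => w k ω * h (z k ω)) μ ∧
      ∫ ω, w k ω * h (z k ω) ∂μ = ∫ x, h x * γ x ∂lam)
    (h : 𝒵 → ℝ) (hh_meas : Measurable h) (hh_bdd : ∃ C, ∀ x, |h x| ≤ C) :
    ∫ ω, ((K : ℝ)⁻¹ * ∑ j, w j ω) *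
        (∑ k, (w k ω / ∑ j, w j ω) * h (z k ω)) ∂μ
      = ∫ x, h x * γ x ∂lam :=
  resampling_preserves_strict_proper_weighting_general lam γ μ K hK w z hsum_pos hspw h hh_meas
    hh_bdd
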